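/- arXiv:1504.03665 — 2 statements merged into one kernel-verified Lean document; each statement's English description precedes it below -/
import Mathlib

section
/- The set of Nuij sequences N_d ⊂ ℝ^d equals b_d^{-1}(H₁^d), where b_d(a₁,…,a_d) = (d·a₁, …, (d!/(d-k)!)·a_k, …, d!·a_d) and H₁^d is the set of (b₁,…,b_d) ∈ ℝ^d such that z^d + Σ b_k z^{d-k} has only real roots. -/
open Polynomial

/-- A real polynomial is hyperbolic if all its complex roots are real. -/
def Hyperbolic (p : Polynomial ℝ) : Prop :=
  ∀ z : ℂ, Polynomial.aeval z p = 0 → z.im = 0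

/-- The perturbed polynomial `p_a(·, s) = p + ∑_{k=1}^d a_k s^k p^{(k)}`. -/
noncomputable def NuijPencil (d : ℕ) (a : ℕ → ℝ) (p : Polynomial ℝ) (s : ℝ) : Polynomial ℝ :=
  p + ∑ k ∈ Finset.Icc 1 d, (a k * s ^ k) • (Polynomial.derivative^[k] p)

/-- `(a₁, …, a_d)` is a Nuij sequence. -/
def IsNuijSeq (d : ℕ) (a : ℕ → ℝ) : Prop :=
  ∀ p : Polynomial ℝ, p.natDegree = d → Hyperbolic p →
    ∀ s : ℝ, Hyperbolic (NuijPencil d a p s)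

/-!
Write `Q = X^d + Σ (d!/(d-k)!) a_k X^{d-k}`. A real polynomial is hyperbolic iff it has no root in
the open upper half-plane, and the pencil of `X^d` at `s = 1` is `Q`, so only sufficiency needs an
argument. Rescaling `Q` to `q(X) = s^d Q(X/s)` gives
`d! · p_a(z, s) = Σ_k q_{d-k} (d-k)! p^{(k)}(z)`.
This pairing of two polynomials without roots in the upper half-plane does not vanish there:
splitting off a root `r` of `p` lowers the degree by one and replaces `q` by its polar derivative
`d q + (z - r - X) q'` with respect to the point `z - r` of the upper half-plane, which by
Laguerre's theorem again has no root in the upper half-plane.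
-/

open ComplexConjugate

def IsUpperStable (p : ℂ[X]) : Prop :=
  ∀ z : ℂ, 0 < z.im → p.eval z ≠ 0

theorem hyperbolic_iff_isUpperStable (p : ℝ[X]) :
    Hyperbolic p ↔ IsUpperStable (p.map (algebraMap ℝ ℂ)) := by
  refine ⟨fun hp z hz h => hz.ne' (hp z (by rwa [← eval_map_algebraMap])), fun hp z hz => ?_⟩
  rcases lt_trichotomy z.im 0 with hneg | hzero | hpos
  · refine absurd ?_ (hp (conj z) (by simpa using hneg))
    rw [eval_map_algebraMap, ← Complex.conjAe_coe, aeval_algHom_apply, hz, map_zero]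
  · exact hzero
  · exact absurd (by rwa [eval_map_algebraMap]) (hp z hpos)

namespace IsUpperStable

variable {p : ℂ[X]}

theorem ne_zero (hp : IsUpperStable p) : p ≠ 0 := fun h =>
  hp Complex.I (by simp) (by simp [h])

theorem im_nonpos_of_isRoot (hp : IsUpperStable p) {r : ℂ} (hr : p.IsRoot r) : r.im ≤ 0 :=
  not_lt.mp fun h => hp r h hr

end IsUpperStable

section PolarDeriv

variable {R : Type*} [CommRing R]

noncomputable def polarDeriv (n : ℕ) (v : R) (q : R[X]) : R[X] :=
  C ((n : R) + 1) * q + (C v - X) * derivative q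

theorem coeff_polarDeriv (n : ℕ) (v : R) (q : R[X]) (i : ℕ) :
    (polarDeriv n v q).coeff i = ((n : R) + 1 - i) * q.coeff i + v * (i + 1) * q.coeff (i + 1) := by
  rw [polarDeriv, coeff_add, coeff_C_mul, sub_mul, coeff_sub, coeff_C_mul, coeff_derivative]
  cases i with
  | zero => rw [mul_coeff_zero, coeff_X_zero, coeff_derivative]; push_cast; ring
  | succ i => rw [coeff_X_mul, coeff_derivative]; push_cast; ring

theorem natDegree_polarDeriv_le {n : ℕ} {q : R[X]} (hq : q.natDegree ≤ n + 1) (v : R) :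
    (polarDeriv n v q).natDegree ≤ n := by
  refine natDegree_le_iff_coeff_eq_zero.mpr fun i hi => ?_
  rw [coeff_polarDeriv, coeff_eq_zero_of_natDegree_lt (by omega : q.natDegree < i + 1), mul_zero,
    add_zero]
  rcases (show n + 1 ≤ i by omega).eq_or_lt with rfl | h
  · push_cast; ring
  · rw [coeff_eq_zero_of_natDegree_lt (by omega), mul_zero]

end PolarDeriv

theorem eval_polarDeriv_prod_X_sub_C (M : Multiset ℂ) {y : ℂ} (hy : y ∉ M) (v : ℂ) :
    eval y (C (Multiset.card M : ℂ) * (M.map (X - C ·)).prod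
        + (C v - X) * derivative (M.map (X - C ·)).prod)
      = eval y (M.map (X - C ·)).prod * (M.map fun r => (v - r) / (y - r)).sum := by
  induction M using Multiset.induction_on with
  | empty => simp
  | cons a M ih =>
    have hya : y - a ≠ 0 := sub_ne_zero.mpr fun h => hy (h ▸ Multiset.mem_cons_self a M)
    have ih := ih fun h => hy (Multiset.mem_cons_of_mem h)
    simp only [Multiset.map_cons, Multiset.prod_cons, Multiset.sum_cons, Multiset.card_cons,
      derivative_mul, derivative_sub, derivative_X, derivative_C, sub_zero, one_mul,
      eval_add, eval_mul, eval_sub, eval_C, eval_X, Nat.cast_add, Nat.cast_one] at ih ⊢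
    linear_combination (y - a) * ih
      - eval y (M.map (X - C ·)).prod * div_mul_cancel₀ (v - a) hya

/-- The Möbius map `r ↦ (v - r) / (y - r)` sends the closed lower half-plane, together with
`∞ ↦ 1`, into the half-plane `{ζ | v.im ≤ (ζ * (y - conj v)).im}`, which avoids `0`. -/
theorem im_le_im_div_mul_sub_conj {y v r : ℂ} (hy : 0 < y.im) (hr : r.im ≤ 0) :
    v.im ≤ ((v - r) / (y - r) * (y - conj v)).im := by
  have hN : 0 < Complex.normSq (y - r) :=
    Complex.normSq_pos.mpr (sub_ne_zero.mpr fun h => by rw [h] at hy; linarith)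
  rw [Complex.mul_im, Complex.div_re, Complex.div_im, ← sub_nonneg]
  have key : 0 ≤ ((v - r).re * (y - r).re + (v - r).im * (y - r).im) * (y - conj v).im
      + ((v - r).im * (y - r).re - (v - r).re * (y - r).im) * (y - conj v).re
      - v.im * Complex.normSq (y - r) := by
    simp only [Complex.sub_re, Complex.sub_im, Complex.conj_re, Complex.conj_im,
      Complex.normSq_apply]
    nlinarith [mul_nonneg hy.le (add_nonneg (sq_nonneg (v.re - r.re)) (sq_nonneg (v.im - r.im))),
      mul_nonpos_of_nonpos_of_nonneg hr
        (add_nonneg (sq_nonneg (y.re - v.re)) (sq_nonneg (y.im - v.im)))]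
  refine (div_nonneg key hN.le).trans_eq ?_
  field_simp

theorem natCast_add_sum_div_sub_ne_zero {N : ℕ} {M : Multiset ℂ} (hM : ∀ r ∈ M, r.im ≤ 0)
    (hNM : 0 < N + Multiset.card M) {y v : ℂ} (hy : 0 < y.im) (hv : 0 < v.im) :
    (N : ℂ) + (M.map fun r => (v - r) / (y - r)).sum ≠ 0 := by
  intro h
  have hterms := Multiset.card_nsmul_le_sum
      (s := M.map fun r => ((v - r) / (y - r) * (y - conj v)).im) (a := v.im) <| by
    simp only [Multiset.mem_map]
    rintro _ ⟨r, hr, rfl⟩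
    exact im_le_im_div_mul_sub_conj hy (hM r hr)
  have him : (((N : ℂ) + (M.map fun r => (v - r) / (y - r)).sum) * (y - conj v)).im
      = N * (y.im + v.im) + (M.map fun r => ((v - r) / (y - r) * (y - conj v)).im).sum := by
    rw [add_mul, ← Multiset.sum_map_mul_right, Complex.add_im]
    congr 1
    · simp
    · exact (map_multiset_sum Complex.imAddGroupHom _).trans (by rw [Multiset.map_map]; rfl)
  rw [h, zero_mul, Complex.zero_im] at him
  rw [Multiset.card_map, nsmul_eq_mul] at hterms
  have : (0 : ℝ) < N + Multiset.card M := by exact_mod_cast hNM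
  nlinarith

theorem IsUpperStable.polarDeriv {n : ℕ} {q : ℂ[X]} (hq : IsUpperStable q)
    (hdeg : q.natDegree ≤ n + 1) {v : ℂ} (hv : 0 < v.im) :
    IsUpperStable (polarDeriv n v q) := by
  intro y hy
  set M := q.roots
  set P := (M.map (X - C ·)).prod
  have hcard : Multiset.card M = q.natDegree := IsAlgClosed.card_roots_eq_natDegree
  set c := q.leadingCoeff
  have hfac : C c * P = q := C_leadingCoeff_mul_prod_multiset_X_sub_C hcard
  have hyM : y ∉ M := fun h => hq y hy (isRoot_of_mem_roots h)
  have hroots : ∀ r ∈ M, r.im ≤ 0 := fun r hr => hq.im_nonpos_of_isRoot (isRoot_of_mem_roots hr)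
  have hPy : eval y P ≠ 0 := by
    refine right_ne_zero_of_mul (a := c) ?_
    rw [← eval_C (a := c) (x := y), ← eval_mul, hfac]
    exact hq y hy
  -- the `n + 1 - deg q` missing roots sit at `∞`, each contributing `1` to the Laguerre sum
  have hsplit : _root_.polarDeriv n v q = C c *
      (C ((n + 1 - Multiset.card M : ℕ) : ℂ) * P
        + (C (Multiset.card M : ℂ) * P + (C v - X) * derivative P)) := by
    rw [_root_.polarDeriv, ← hfac, derivative_C_mul, Nat.cast_sub (by omega)]
    simp only [map_sub, map_add, map_one, map_natCast]
    push_cast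
    ring
  rw [hsplit, eval_mul, eval_C, eval_add, eval_polarDeriv_prod_X_sub_C M hyM v, eval_mul, eval_C,
    mul_comm _ (eval y P), ← mul_add]
  have hc : c ≠ 0 := leadingCoeff_ne_zero.mpr hq.ne_zero
  exact mul_ne_zero hc (mul_ne_zero hPy
    (natCast_add_sum_div_sub_ne_zero hroots (by omega) hy hv))

theorem eval_iterate_derivative_X_sub_C_mul {R : Type*} [CommRing R] (r z : R) (p : R[X])
    (k : ℕ) : (derivative^[k] ((X - C r) * p)).eval z
      = (z - r) * (derivative^[k] p).eval z + k * (derivative^[k - 1] p).eval z := by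
  rw [sub_mul, iterate_derivative_sub, mul_comm X, iterate_derivative_mul_X,
    iterate_derivative_C_mul]
  simp only [eval_sub, eval_add, eval_mul, eval_C, eval_X, nsmul_eq_mul, eval_natCast]
  ring

open Nat in
noncomputable def derivPairing (n : ℕ) (q p : ℂ[X]) (z : ℂ) : ℂ :=
  ∑ k ∈ Finset.range (n + 1), q.coeff (n - k) * (n - k)! * (derivative^[k] p).eval z

theorem derivPairing_X_sub_C_mul {n : ℕ} (q : ℂ[X]) {p : ℂ[X]} (hp : p.natDegree ≤ n) (r z : ℂ) :
    derivPairing (n + 1) q ((X - C r) * p) z = derivPairing n (polarDeriv n (z - r) q) p z := by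
  simp only [derivPairing, eval_iterate_derivative_X_sub_C_mul, mul_add, Finset.sum_add_distrib]
  rw [Finset.sum_range_succ (fun k => _ * ((z - r) * _)),
    iterate_derivative_eq_zero (hp.trans_lt n.lt_succ_self),
    Finset.sum_range_succ' (fun k => _ * ((k : ℂ) * _))]
  simp only [eval_zero, mul_zero, add_zero, Nat.cast_zero, zero_mul, Nat.add_sub_cancel,
    ← Finset.sum_add_distrib]
  refine Finset.sum_congr rfl fun k hk => ?_
  have hkn : k ≤ n := Nat.lt_succ_iff.mp (Finset.mem_range.mp hk)
  rw [coeff_polarDeriv, show n + 1 - k = n - k + 1 by omega, show n + 1 - (k + 1) = n - k by omega,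
    Nat.factorial_succ]
  push_cast [Nat.cast_sub hkn]
  ring

theorem derivPairing_ne_zero {n : ℕ} {q p : ℂ[X]} (hq : IsUpperStable q) (hqn : q.natDegree ≤ n)
    (hp : IsUpperStable p) (hpn : p.natDegree = n) {z : ℂ} (hz : 0 < z.im) :
    derivPairing n q p z ≠ 0 := by
  induction n generalizing q p with
  | zero =>
    have hq0 : eval z q = q.coeff 0 := by rw [eq_C_of_natDegree_le_zero hqn, eval_C, coeff_C_zero]
    simpa [derivPairing, ← hq0] using mul_ne_zero (hq z hz) (hp z hz)
  | succ n ih =>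
    obtain ⟨r, hr⟩ := Complex.exists_root (natDegree_pos_iff_degree_pos.mp (by rw [hpn]; omega))
    set p₁ := p /ₘ (X - C r)
    have hfac : (X - C r) * p₁ = p := mul_divByMonic_eq_iff_isRoot.mpr hr
    have hp₁ : IsUpperStable p₁ := fun y hy h => hp y hy (by rw [← hfac, eval_mul, h, mul_zero])
    have hp₁n : p₁.natDegree = n := by
      rw [natDegree_divByMonic _ (monic_X_sub_C r), natDegree_X_sub_C, hpn, Nat.add_sub_cancel]
    have hv : 0 < (z - r).im := by
      rw [Complex.sub_im]; linarith [hp.im_nonpos_of_isRoot hr]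
    rw [← hfac, derivPairing_X_sub_C_mul q hp₁n.le]
    exact ih (hq.polarDeriv hqn hv) (natDegree_polarDeriv_le hqn _) hp₁ hp₁n

section MonicOfCoeffs

variable {R : Type*}

noncomputable def monicOfCoeffs [Semiring R] (d : ℕ) (b : ℕ → R) : R[X] :=
  X ^ d + ∑ k ∈ Finset.Icc 1 d, C (b k) * X ^ (d - k)

theorem map_monicOfCoeffs [Semiring R] {S : Type*} [Semiring S] (f : R →+* S) (d : ℕ)
    (b : ℕ → R) : (monicOfCoeffs d b).map f = monicOfCoeffs d fun k => f (b k) := by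
  simp [monicOfCoeffs, Polynomial.map_sum]

theorem eval_monicOfCoeffs [CommSemiring R] (d : ℕ) (b : ℕ → R) (x : R) :
    (monicOfCoeffs d b).eval x = x ^ d + ∑ k ∈ Finset.Icc 1 d, b k * x ^ (d - k) := by
  simp [monicOfCoeffs, eval_finsetSum]

theorem natDegree_monicOfCoeffs_le [Semiring R] (d : ℕ) (b : ℕ → R) :
    (monicOfCoeffs d b).natDegree ≤ d :=
  natDegree_add_le_of_degree_le (natDegree_X_pow_le d) <| natDegree_sum_le_of_forall_le _ _
    fun k _ => (natDegree_C_mul_X_pow_le _ _).trans (Nat.sub_le d k)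

theorem coeff_monicOfCoeffs_self [Semiring R] (d : ℕ) (b : ℕ → R) :
    (monicOfCoeffs d b).coeff d = 1 := by
  rw [monicOfCoeffs, coeff_add, coeff_X_pow_self, finsetSum_coeff, Finset.sum_eq_zero, add_zero]
  intro k hk
  rw [coeff_C_mul_X_pow, if_neg (by grind)]

theorem coeff_monicOfCoeffs_sub [Semiring R] {d k : ℕ} (hk : k ∈ Finset.Icc 1 d) (b : ℕ → R) :
    (monicOfCoeffs d b).coeff (d - k) = b k := by
  obtain ⟨hk1, hkd⟩ := Finset.mem_Icc.mp hk
  rw [monicOfCoeffs, coeff_add, coeff_X_pow, if_neg (by omega), zero_add, finsetSum_coeff,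
    Finset.sum_eq_single_of_mem k hk fun j hj hjk => ?_, coeff_C_mul_X_pow, if_pos rfl]
  rw [coeff_C_mul_X_pow, if_neg (by grind)]

theorem eval_monicOfCoeffs_mul_pow [CommSemiring R] (d : ℕ) (b : ℕ → R) (s y : R) :
    (monicOfCoeffs d fun k => b k * s ^ k).eval (s * y) = s ^ d * (monicOfCoeffs d b).eval y := by
  simp only [eval_monicOfCoeffs, mul_add, Finset.mul_sum]
  congr 1
  · ring
  · refine Finset.sum_congr rfl fun k hk => ?_
    obtain ⟨-, hkd⟩ := Finset.mem_Icc.mp hk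
    rw [mul_pow, ← Nat.sub_add_cancel hkd, pow_add, Nat.add_sub_cancel]
    ring

end MonicOfCoeffs

theorem hyperbolic_X_pow (d : ℕ) : Hyperbolic (X ^ d) := by
  intro z hz
  rw [map_pow, aeval_X] at hz
  rw [pow_eq_zero_iff'.mp hz |>.1, Complex.zero_im]

theorem Hyperbolic.monicOfCoeffs_mul_pow {d : ℕ} {b : ℕ → ℝ} (h : Hyperbolic (monicOfCoeffs d b))
    (s : ℝ) : Hyperbolic (monicOfCoeffs d fun k => b k * s ^ k) := by
  rcases eq_or_ne s 0 with rfl | hs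
  · convert hyperbolic_X_pow d
    refine add_eq_left.mpr (Finset.sum_eq_zero fun k hk => ?_)
    simp [zero_pow (Nat.one_le_iff_ne_zero.mp (Finset.mem_Icc.mp hk).1)]
  intro z hz
  have hs' : (s : ℂ) ≠ 0 := Complex.ofReal_ne_zero.mpr hs
  rw [← eval_map_algebraMap, map_monicOfCoeffs, ← mul_div_cancel₀ z hs'] at hz
  simp only [Complex.coe_algebraMap, Complex.ofReal_mul, Complex.ofReal_pow] at hz
  rw [eval_monicOfCoeffs_mul_pow, mul_eq_zero, or_iff_right (pow_ne_zero d hs')] at hz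
  have := h (z / s) (by rwa [← eval_map_algebraMap, map_monicOfCoeffs])
  rwa [Complex.div_ofReal_im, div_eq_zero_iff, or_iff_left hs] at this

theorem nuijPencil_X_pow_one (d : ℕ) (a : ℕ → ℝ) :
    NuijPencil d a (X ^ d) 1 = monicOfCoeffs d fun k => (d.descFactorial k : ℝ) * a k := by
  refine congrArg (X ^ d + ·) (Finset.sum_congr rfl fun k _ => ?_)
  rw [iterate_derivative_X_pow_eq_smul, one_pow, mul_one, smul_smul, smul_eq_C_mul, mul_comm (a k)]

open Nat in
theorem derivPairing_eq_factorial_mul_aeval_nuijPencil (d : ℕ) (a : ℕ → ℝ) (s : ℝ) (p : ℝ[X])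
    (z : ℂ) :
    derivPairing d
        ((monicOfCoeffs d fun k => (d.descFactorial k : ℝ) * a k * s ^ k).map (algebraMap ℝ ℂ))
        (p.map (algebraMap ℝ ℂ)) z
      = d ! * aeval z (NuijPencil d a p s) := by
  have hrange : Finset.range (d + 1) = insert 0 (Finset.Icc 1 d) := by
    ext k; simp only [Finset.mem_range, Finset.mem_insert, Finset.mem_Icc]; omega
  rw [derivPairing, hrange, Finset.sum_insert (by simp), NuijPencil, map_add, mul_add, map_sum,
    Finset.mul_sum, map_monicOfCoeffs]
  congr 1
  · rw [Nat.sub_zero, coeff_monicOfCoeffs_self, one_mul, Function.iterate_zero_apply,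
      eval_map_algebraMap, mul_comm]
  · refine Finset.sum_congr rfl fun k hk => ?_
    have hfact : ((d - k)! : ℂ) * d.descFactorial k = d ! := by
      exact_mod_cast factorial_mul_descFactorial (Finset.mem_Icc.mp hk).2
    rw [coeff_monicOfCoeffs_sub hk, smul_eq_C_mul, map_mul (aeval z), aeval_C,
      ← eval_map_algebraMap, ← iterate_derivative_map]
    simp only [Complex.coe_algebraMap]
    push_cast
    linear_combination (a k : ℂ) * (s : ℂ) ^ k
      * eval z (derivative^[k] (p.map (algebraMap ℝ ℂ))) * hfact

/-- `N_d = b_d^{-1}(H₁^d)` where `b_d(a)_k = (d!/(d-k)!) a_k`:  `a` is a Nuij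
sequence iff the monic polynomial with coefficients `(d!/(d-k)!) a_k` is
hyperbolic. -/
theorem nuijSeq_eq_preimage (d : ℕ) (a : ℕ → ℝ) :
    IsNuijSeq d a ↔
      Hyperbolic ((X : Polynomial ℝ) ^ d +
        ∑ k ∈ Finset.Icc 1 d, Polynomial.C ((d.descFactorial k : ℝ) * a k) * X ^ (d - k)) := by
  change IsNuijSeq d a ↔ Hyperbolic (monicOfCoeffs d fun k => (d.descFactorial k : ℝ) * a k)
  refine ⟨fun ha => nuijPencil_X_pow_one d a ▸ ha _ (natDegree_X_pow d) (hyperbolic_X_pow d) 1,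
    fun hQ p hpd hp s => ?_⟩
  rw [hyperbolic_iff_isUpperStable] at hp ⊢
  intro z hz hzero
  refine derivPairing_ne_zero ((hyperbolic_iff_isUpperStable _).mp (hQ.monicOfCoeffs_mul_pow s))
    (natDegree_map_le.trans (natDegree_monicOfCoeffs_le _ _)) hp
    (by rw [natDegree_map, hpd]) hz ?_
  rw [derivPairing_eq_factorial_mul_aeval_nuijPencil, ← eval_map_algebraMap, hzero, mul_zero]
end

section
/- Every sequence of the form a_i = (1/i!)·(α-β)^{i-1}(α+(i-1)β), i = 1,…,d, for real α, β, is a Nuij sequence admitting a universal determinantal representation with associated matrix T_{α,β}. -/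
open Polynomial

open Finset Matrix
open scoped Nat

/-! With `t = s (α - β)` and `c = s β` one has `a_k s^k = t^k / k! + c t^(k-1) / (k-1)!`, so by
Taylor's formula the Nuij pencil of `p` is `z ↦ p(z + t) + c p'(z + t)`. On the matrix side
`z I + D + s T_{α,β} = (z + t) I + D + c 𝟙𝟙ᵀ`, and the matrix determinant lemma gives
`det (x I + D + c 𝟙𝟙ᵀ) = p(x) + c p'(x)` for `p(x) = det (x I + D)`. Hence the pencil is the
characteristic polynomial of the real symmetric matrix `-(D + s T_{α,β})` and has only real roots.
A hyperbolic polynomial of degree `d` splits over `ℝ`, so it is a constant times such a `p`. -/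

theorem Polynomial.eval_add_eq_sum_range_iterate_derivative {K : Type*} [Field K] [CharZero K]
    {p : K[X]} {n : ℕ} (hp : p.natDegree < n) (x t : K) :
    p.eval (x + t) = ∑ k ∈ range n, t ^ k / k ! * (derivative^[k] p).eval x := by
  rw [add_comm, ← taylor_eval, eval_eq_sum_range' (by rwa [natDegree_taylor])]
  refine sum_congr rfl fun k _ => ?_
  have : (k ! : K) ≠ 0 := mod_cast k.factorial_ne_zero
  rw [taylor_coeff, ← factorial_smul_hasseDeriv, LinearMap.smul_apply, eval_smul, nsmul_eq_mul]
  field_simp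

theorem Polynomial.Splits.eq_C_leadingCoeff_mul_prod_roots {K : Type*} [Field K] [DecidableEq K]
    {p : K[X]} (hp : p.Splits) : p = C p.leadingCoeff * ∏ x : p.roots, (X - C (x : K)) := by
  rw [prod_eq_multiset_prod, Multiset.map_univ p.roots fun a => X - C a]
  exact hp.eq_prod_roots

section DiagonalAddConst

variable {K : Type*} [Field K] {ι : Type*} [Fintype ι] [DecidableEq ι]

theorem Matrix.det_diagonal_add_const_of_ne_zero {μ : ι → K} (hμ : ∀ i, μ i ≠ 0) (c : K) :
    det (diagonal μ + of fun _ _ => c) = ∏ i, μ i + c * ∑ j, ∏ i ∈ univ.erase j, μ i := by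
  have hfactor : diagonal μ + of (fun _ _ => c) = diagonal μ *
      (1 + replicateCol Unit (fun i => c / μ i) * replicateRow Unit (fun _ : ι => (1 : K))) := by
    rw [Matrix.mul_add, Matrix.mul_one]
    ext i j
    simp [Matrix.mul_apply, diagonal_apply, mul_div_cancel₀ c (hμ i)]
  rw [hfactor, det_mul, det_diagonal, det_one_add_replicateCol_mul_replicateRow]
  simp only [dotProduct, one_mul, mul_add, mul_one, mul_sum]
  refine congrArg _ (sum_congr rfl fun j _ => ?_)
  rw [← mul_prod_erase univ μ (mem_univ j)]
  field_simp [hμ j]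

theorem Matrix.charpoly_neg_diagonal_add_const [Infinite K] (l : ι → K) (c : K) :
    (-(diagonal l + of fun _ _ => c)).charpoly
      = ∏ i, (X + C (l i)) + C c * derivative (∏ i, (X + C (l i))) := by
  -- both sides agree at every `x` for which `x • 1 + diagonal l` is invertible
  refine eq_of_infinite_eval_eq _ _ ((Set.finite_range (-l)).infinite_compl.mono fun x hx => ?_)
  have hμ : ∀ i, x + l i ≠ 0 := fun i h => hx ⟨i, by simp; linear_combination -h⟩
  have hM : scalar ι x - -(diagonal l + of fun _ _ => c)
      = diagonal (fun i => x + l i) + of fun _ _ => c := by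
    ext i j
    rcases eq_or_ne i j with rfl | hij
    · simp; ring
    · simp [hij]
  rw [Set.mem_ofPred_eq, eval_charpoly, hM, det_diagonal_add_const_of_ne_zero hμ]
  simp [derivative_prod_finset, eval_prod, eval_finsetSum]

end DiagonalAddConst

theorem Hyperbolic.ne_zero {p : ℝ[X]} (hp : Hyperbolic p) : p ≠ 0 := by
  rintro rfl
  simpa using hp Complex.I (by simp)

theorem Hyperbolic.splits {p : ℝ[X]} (hp : Hyperbolic p) : p.Splits := by
  refine Splits.of_splits_map_of_injective (algebraMap ℝ ℂ).injective (IsAlgClosed.splits _)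
    fun z hz => ⟨z.re, Complex.ext rfl (hp z ?_).symm⟩
  rwa [mem_roots (map_ne_zero hp.ne_zero), IsRoot, eval_map_algebraMap] at hz

theorem Hyperbolic.C_mul {p : ℝ[X]} (hp : Hyperbolic p) {a : ℝ} (ha : a ≠ 0) :
    Hyperbolic (C a * p) := fun z hz =>
  hp z (by simpa [ha] using hz)

theorem hyperbolic_prod_X_sub_C {ι : Type*} [Fintype ι] (r : ι → ℝ) :
    Hyperbolic (∏ i, (X - C (r i))) := by
  intro z hz
  obtain ⟨i, -, hi⟩ := prod_eq_zero_iff.1 (by simpa [aeval_def, eval₂_finsetProd] using hz)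
  simp [sub_eq_zero.1 hi]

theorem Matrix.IsHermitian.hyperbolic_charpoly {ι : Type*} [Fintype ι] [DecidableEq ι]
    {B : Matrix ι ι ℝ} (hB : B.IsHermitian) : Hyperbolic B.charpoly := by
  rw [hB.charpoly_eq]
  exact hyperbolic_prod_X_sub_C _

theorem nuijPencil_C_mul (d : ℕ) (a : ℕ → ℝ) (c : ℝ) (p : ℝ[X]) (s : ℝ) :
    NuijPencil d a (C c * p) s = C c * NuijPencil d a p s := by
  simp only [NuijPencil, iterate_derivative_C_mul, mul_add, mul_sum, smul_eq_C_mul]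
  exact congrArg _ (sum_congr rfl fun k _ => by ring)

noncomputable def nuijToeplitzSeq (α β : ℝ) (k : ℕ) : ℝ :=
  1 / (k ! : ℝ) * (α - β) ^ (k - 1) * (α + ((k : ℝ) - 1) * β)

section NuijToeplitz

variable (α β : ℝ)

theorem nuijToeplitzSeq_mul_pow (s : ℝ) {k : ℕ} (hk : 1 ≤ k) :
    nuijToeplitzSeq α β k * s ^ k
      = (s * (α - β)) ^ k / k ! + s * β * ((s * (α - β)) ^ (k - 1) / (k - 1) !) := by
  obtain ⟨k, rfl⟩ := Nat.exists_eq_add_of_le' hk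
  have : (k ! : ℝ) ≠ 0 := mod_cast k.factorial_ne_zero
  simp only [nuijToeplitzSeq, Nat.add_sub_cancel, Nat.factorial_succ, Nat.cast_mul, mul_pow]
  push_cast
  field_simp
  ring

theorem eval_nuijPencil_nuijToeplitzSeq {d : ℕ} {p : ℝ[X]} (hp : p.natDegree ≤ d) (s z : ℝ) :
    (NuijPencil d (nuijToeplitzSeq α β) p s).eval z
      = p.eval (z + s * (α - β)) + s * β * (derivative p).eval (z + s * (α - β)) := by
  set t := s * (α - β)
  have hp' : (derivative p).natDegree < d + 1 := (natDegree_derivative_le p).trans_lt (by omega)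
  rw [eval_add_eq_sum_range_iterate_derivative (Nat.lt_succ_of_le hp),
    eval_add_eq_sum_range_iterate_derivative hp', sum_range_succ', sum_range_succ,
    ← Function.iterate_succ_apply, iterate_derivative_eq_zero (Nat.lt_succ_of_le hp)]
  simp only [NuijPencil, eval_add, eval_finsetSum, eval_smul, smul_eq_mul,
    ← Finset.Ico_add_one_right_eq_Icc, sum_Ico_eq_sum_range]
  rw [eval_zero, mul_zero, add_zero, mul_sum, add_comm _ (t ^ 0 / _ * _), add_assoc,
    ← sum_add_distrib]
  simp only [pow_zero, Nat.factorial_zero, Nat.cast_one, div_one, one_mul,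
    Function.iterate_zero_apply, ← Function.iterate_succ_apply]
  refine congrArg _ (sum_congr rfl fun k _ => ?_)
  rw [add_comm 1 k, nuijToeplitzSeq_mul_pow α β s (by omega), Nat.add_sub_cancel]
  ring

variable {ι : Type*} [Fintype ι] [DecidableEq ι]

theorem det_add_smul_toeplitz_eq_eval_nuijPencil {d : ℕ} (hd : Fintype.card ι ≤ d) (l : ι → ℝ)
    (z s : ℝ) :
    det (z • (1 : Matrix ι ι ℝ) + diagonal l + s • of fun i j : ι => if i = j then α else β)
      = (NuijPencil d (nuijToeplitzSeq α β) (∏ i, (X + C (l i))) s).eval z := by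
  have hdeg : (∏ i, (X + C (l i))).natDegree ≤ d := by
    rw [natDegree_prod_of_monic _ _ fun i _ => monic_X_add_C (l i)]
    simpa using hd
  have hM : z • (1 : Matrix ι ι ℝ) + diagonal l + s • (of fun i j : ι => if i = j then α else β)
      = scalar ι (z + s * (α - β)) - -(diagonal l + of fun _ _ => s * β) := by
    ext i j
    rcases eq_or_ne i j with rfl | hij
    · simp; ring
    · simp [hij]
  rw [eval_nuijPencil_nuijToeplitzSeq α β hdeg, hM, ← eval_charpoly,
    charpoly_neg_diagonal_add_const]
  simp

theorem hyperbolic_nuijPencil_prod {d : ℕ} (hd : Fintype.card ι ≤ d) (l : ι → ℝ) (s : ℝ) :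
    Hyperbolic (NuijPencil d (nuijToeplitzSeq α β) (∏ i, (X + C (l i))) s) := by
  set B := diagonal l + s • of fun i j : ι => if i = j then α else β
  have hB : B.IsHermitian := IsHermitian.ext fun i j => by
    rcases eq_or_ne i j with rfl | hij
    · simp [B]
    · simp [B, hij, hij.symm]
  have hpencil : NuijPencil d (nuijToeplitzSeq α β) (∏ i, (X + C (l i))) s = (-B).charpoly := by
    refine Polynomial.funext fun z => ?_
    rw [← det_add_smul_toeplitz_eq_eval_nuijPencil α β hd, eval_charpoly, sub_neg_eq_add,
      ← add_assoc, scalar_apply, smul_one_eq_diagonal]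
  rw [hpencil]
  exact hB.neg.hyperbolic_charpoly

theorem isNuijSeq_nuijToeplitzSeq (d : ℕ) : IsNuijSeq d (nuijToeplitzSeq α β) := by
  classical
  intro p hdeg hp s
  have hroots : Fintype.card p.roots ≤ d := by
    rw [Multiset.card_coe, ← hp.splits.natDegree_eq_card_roots, hdeg]
  have hfactor : p = C p.leadingCoeff * ∏ x : p.roots, (X + C (-(x : ℝ))) := by
    simpa [← sub_eq_add_neg] using hp.splits.eq_C_leadingCoeff_mul_prod_roots
  rw [hfactor, nuijPencil_C_mul]
  exact (hyperbolic_nuijPencil_prod α β hroots _ s).C_mul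
    (leadingCoeff_ne_zero.2 hp.ne_zero)

end NuijToeplitz

/-- Every sequence `a_k = (1/k!)(α-β)^{k-1}(α+(k-1)β)` is a Nuij sequence which
admits a universal determinantal representation with matrix `T_{α,β}`. -/
theorem toeplitz_seq_isNuij_univDetRep (d : ℕ) (α β : ℝ) :
    IsNuijSeq d
      (fun k => (1 / (Nat.factorial k : ℝ)) * (α - β) ^ (k - 1) * (α + ((k : ℝ) - 1) * β)) ∧
    ∀ (lam : Fin d → ℝ) (z s : ℝ),
      Matrix.det (z • (1 : Matrix (Fin d) (Fin d) ℝ) + Matrix.diagonal lam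
          + s • Matrix.of (fun i j : Fin d => if i = j then α else β))
        = Polynomial.eval z
            (NuijPencil d
              (fun k => (1 / (Nat.factorial k : ℝ)) * (α - β) ^ (k - 1) * (α + ((k : ℝ) - 1) * β))
              (∏ i, (X + Polynomial.C (lam i))) s) :=
  ⟨isNuijSeq_nuijToeplitzSeq α β d, fun lam z s =>
    det_add_smul_toeplitz_eq_eval_nuijPencil α β (Fintype.card_fin d).le lam z s⟩
end
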